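/- arXiv:math/0607566 — 3 statements merged into one kernel-verified Lean document; each statement's English description precedes it below -/
import Mathlib

section
/- Let A and B be elements of a (possibly noncommutative) ring and q a unit such that q·A·B + B·A = 0. Then for every natural number n, (A+B)^n = Σ_{k=0}^{n} ⟨n choose k⟩_q · A^{n-k} · B^k, where ⟨n choose k⟩_q = {n}_q! / ({k}_q! {n-k}_q!) is the super q-binomial coefficient built from the super q-numbers {k}_q = (1 - (-1)^k q^k)/(1+q). -/
noncomputable section

/-- The super q-number `{k}_q = (1 - (-1)^k q^k)/(1+q) = (1-(-q)^k)/(1+q)`. -/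
def sqNum {K : Type*} [Field K] (q : K) (k : ℕ) : K := (1 - (-q) ^ k) / (1 + q)

/-- The super q-factorial `{k}_q! = {k}_q {k-1}_q ⋯ {1}_q`, with `{0}_q! = 1`. -/
def sqFact {K : Type*} [Field K] (q : K) : ℕ → K
  | 0 => 1
  | k + 1 => sqNum q (k + 1) * sqFact q k

/-- The super q-binomial coefficient `⟨n choose k⟩_q = {n}_q!/({k}_q!{n-k}_q!)`. -/
def sqBinom {K : Type*} [Field K] (q : K) (n k : ℕ) : K :=
  sqFact q n / (sqFact q k * sqFact q (n - k))

lemma sqFact_ne_zero {K : Type*} [Field K] (q : K) (n : ℕ)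
    (hinv : ∀ k : ℕ, 1 ≤ k → k ≤ n → sqNum q k ≠ 0) : sqFact q n ≠ 0 := by
  induction n with
  | zero => simp [sqFact]
  | succ n ihn =>
    exact mul_ne_zero (hinv (n+1) (by omega) le_rfl)
      (ihn fun k h1 h2 => hinv k h1 (h2.trans (Nat.le_succ n)))

lemma sqNum_add {K : Type*} [Field K] {q : K} (h1 : (1:K) + q ≠ 0) (k m : ℕ) :
    sqNum q (k + m) = (-q) ^ k * sqNum q m + sqNum q k := by
  unfold sqNum
  rw [pow_add]
  field_simp
  ring

lemma sqBinom_zero {K : Type*} [Field K] {q : K} {n : ℕ} (hF : sqFact q n ≠ 0) :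
    sqBinom q n 0 = 1 := by
  simp [sqBinom, sqFact, hF]

lemma sqBinom_self {K : Type*} [Field K] {q : K} {n : ℕ} (hF : sqFact q n ≠ 0) :
    sqBinom q n n = 1 := by
  simp [sqBinom, sqFact, hF]

lemma sqPascal {K : Type*} [Field K] {q : K} (h1 : (1:K) + q ≠ 0) (k n : ℕ) (hk : k < n)
    (hinv : ∀ j : ℕ, 1 ≤ j → j ≤ n → sqNum q j ≠ 0) :
    sqBinom q (n+1) (k+1) = (-q) ^ (k+1) * sqBinom q n (k+1) + sqBinom q n k := by
  obtain ⟨b, rfl⟩ : ∃ b, n = k + b + 1 := ⟨n - k - 1, by omega⟩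
  have hfk : sqFact q k ≠ 0 := sqFact_ne_zero q k (fun j hj1 hj2 => hinv j hj1 (by omega))
  have hfb : sqFact q b ≠ 0 := sqFact_ne_zero q b (fun j hj1 hj2 => hinv j hj1 (by omega))
  have hnk : sqNum q (k+1) ≠ 0 := hinv (k+1) (by omega) (by omega)
  have hnb : sqNum q (b+1) ≠ 0 := hinv (b+1) (by omega) (by omega)
  have e1 : k + b + 1 + 1 - (k + 1) = b + 1 := by omega
  have e2 : k + b + 1 - (k + 1) = b := by omega
  have e3 : k + b + 1 - k = b + 1 := by omega
  have e4 : k + b + 1 + 1 = (k+1) + (b+1) := by omega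
  unfold sqBinom
  rw [e1, e2, e3]
  show sqFact q ((k+b+1)+1) / _ = _
  rw [show (k+b+1)+1 = (k+b+1)+1 from rfl]
  have hFtop : sqFact q ((k+b+1)+1) = sqNum q ((k+1)+(b+1)) * sqFact q (k+b+1) := by
    rw [show (k+1)+(b+1) = (k+b+1)+1 by omega]; rfl
  rw [hFtop, sqNum_add h1, show sqFact q (k+1) = sqNum q (k+1) * sqFact q k from rfl,
    show sqFact q (b+1) = sqNum q (b+1) * sqFact q b from rfl]
  field_simp

/-- The super q-binomial theorem: if `q·A·B + B·A = 0` then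
`(A+B)^n = Σ_{k=0}^{n} ⟨n choose k⟩_q · A^{n-k} · B^k`. -/
theorem super_q_binomial_theorem {K : Type*} [Field K] {R : Type*} [Ring R] [Algebra K R]
    (q : K) (hq : IsUnit q) (A B : R) (h : q • (A * B) + B * A = 0) (n : ℕ)
    (hinv : ∀ k : ℕ, 1 ≤ k → k ≤ n → sqNum q k ≠ 0) :
    (A + B) ^ n = ∑ k ∈ Finset.range (n + 1), sqBinom q n k • (A ^ (n - k) * B ^ k) := by
  have hBA : B * A = (-q) • (A * B) := by
    rw [neg_smul]
    exact eq_neg_of_add_eq_zero_right h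
  have hBkA : ∀ k : ℕ, B ^ k * A = ((-q) ^ k) • (A * B ^ k) := by
    intro k
    induction k with
    | zero => simp
    | succ k ihk =>
      rw [pow_succ, mul_assoc, hBA, mul_smul_comm, ← mul_assoc, ihk, smul_mul_assoc,
        smul_smul, mul_assoc, ← pow_succ, ← pow_succ']
  induction n with
  | zero => simp [sqBinom, sqFact]
  | succ n ihn =>
    have h1 : (1:K) + q ≠ 0 := by
      intro h0
      exact hinv 1 le_rfl (by omega) (by simp [sqNum, h0])
    have hinv' : ∀ k : ℕ, 1 ≤ k → k ≤ n → sqNum q k ≠ 0 :=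
      fun k hk1 hk2 => hinv k hk1 (hk2.trans (Nat.le_succ n))
    have hFn : sqFact q n ≠ 0 := sqFact_ne_zero q n hinv'
    have hFn1 : sqFact q (n+1) ≠ 0 := sqFact_ne_zero q (n+1) hinv
    have step1 : (A + B) ^ (n+1)
        = ∑ k ∈ Finset.range (n + 1), ((-q) ^ k * sqBinom q n k) • (A ^ (n+1-k) * B ^ k)
        + ∑ k ∈ Finset.range (n + 1), sqBinom q n k • (A ^ (n+1-(k+1)) * B ^ (k+1)) := by
      rw [pow_succ, ihn hinv', mul_add, Finset.sum_mul, Finset.sum_mul]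
      congr 1
      · refine Finset.sum_congr rfl fun k hk => ?_
        have hkn : k ≤ n := Finset.mem_range_succ_iff.mp hk
        have e : n + 1 - k = (n - k) + 1 := by omega
        rw [e, smul_mul_assoc, mul_assoc, hBkA, mul_smul_comm, smul_smul, ← mul_assoc,
          ← pow_succ, mul_comm (sqBinom q n k) ((-q)^k)]
      · refine Finset.sum_congr rfl fun k hk => ?_
        have e : n + 1 - (k + 1) = n - k := by omega
        rw [e, smul_mul_assoc, mul_assoc, ← pow_succ]
    rw [step1, Finset.sum_range_succ' (fun k => ((-q) ^ k * sqBinom q n k) • (A ^ (n+1-k) * B ^ k)),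
      Finset.sum_range_succ (fun k => sqBinom q n k • (A ^ (n+1-(k+1)) * B ^ (k+1))),
      Finset.sum_range_succ' (fun k => sqBinom q (n+1) k • (A ^ (n+1-k) * B ^ k)),
      Finset.sum_range_succ (fun k => sqBinom q (n+1) (k+1) • (A ^ (n+1-(k+1)) * B ^ (k+1)))]
    have hb0 : sqBinom q (n+1) 0 = 1 := sqBinom_zero hFn1
    have hb0' : sqBinom q n 0 = 1 := sqBinom_zero hFn
    have hbs : sqBinom q (n+1) (n+1) = 1 := sqBinom_self hFn1
    have hbs' : sqBinom q n n = 1 := sqBinom_self hFn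
    have hsum : (∑ k ∈ Finset.range n, ((-q) ^ (k+1) * sqBinom q n (k+1)) • (A ^ (n+1-(k+1)) * B ^ (k+1)))
        + ∑ k ∈ Finset.range n, sqBinom q n k • (A ^ (n+1-(k+1)) * B ^ (k+1))
        = ∑ k ∈ Finset.range n, sqBinom q (n+1) (k+1) • (A ^ (n+1-(k+1)) * B ^ (k+1)) := by
      rw [← Finset.sum_add_distrib]
      refine Finset.sum_congr rfl fun k hk => ?_
      rw [← add_smul, ← sqPascal h1 k n (Finset.mem_range.mp hk) hinv']
    simp only [hb0, hb0', hbs, hbs', pow_zero, one_mul, one_smul]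
    rw [← hsum]
    abel
end
end

section
/- Define the little Q-Jacobi polynomial p^{(α,β)}_m(z) = Σ_n ((Q^{-m};Q)_n (Q^{α+β+m+1};Q)_n)/((Q^{α+1};Q)_n (Q;Q)_n) (Qz)^n, where (x;Q)_n = Π_{k=0}^{n-1}(1-xQ^k). For integers ℓ ≥ 0 and -ℓ ≤ m, m' ≤ ℓ with m' ≥ m, the polynomial P^ℓ_{m'm}(ζ) = Σ_c (-1)^{c(ℓ-m)+c(c-1)/2} q^{-c(m'+m-1)/2} ([m'-m]_K![ℓ+m]_K![ℓ-m+c]_K!)/([m'-m+c]_K![ℓ+m-c]_K![ℓ-m]_K![c]_K!) ζ^c equals p^{(m'-m, -m'-m)}_{ℓ+m}(ζ) with Q = -q. -/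
noncomputable section

open Polynomial

/-- The shifted factorial `(x;Q)_n = Π_{k=0}^{n-1}(1 - x Q^k)`. -/
def shiftedFact (x Q : ℝ) (n : ℕ) : ℝ := ∏ k ∈ Finset.range n, (1 - x * Q ^ k)

/-- The little Q-Jacobi polynomial
`p^{(α,β)}_m(z) = Σ_n ((Q^{-m};Q)_n (Q^{α+β+m+1};Q)_n)/((Q^{α+1};Q)_n (Q;Q)_n) (Qz)^n`
(the series terminates at `n = m` since `(Q^{-m};Q)_n = 0` for `n > m`). -/
def littleQJacobi (Q : ℝ) (α β : ℤ) (m : ℕ) : Polynomial ℝ :=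
  ∑ n ∈ Finset.range (m + 1),
    C ((shiftedFact (Q ^ (-(m : ℤ))) Q n * shiftedFact (Q ^ (α + β + (m : ℤ) + 1)) Q n) /
        (shiftedFact (Q ^ (α + 1)) Q n * shiftedFact Q Q n) * Q ^ (n : ℤ)) * X ^ n

/-- The deformed integer `[m]_K = (q^{-m/2}-(-1)^m q^{m/2})/(q^{-1/2}+q^{1/2})` (real powers). -/
def Kr (q : ℝ) (m : ℕ) : ℝ :=
  (q ^ (-(m : ℝ) / 2) - (-1 : ℝ) ^ m * q ^ ((m : ℝ) / 2)) /
    (q ^ (-(1 : ℝ) / 2) + q ^ ((1 : ℝ) / 2))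

/-- The deformed factorial `[n]_K!`. -/
def KfactR (q : ℝ) (n : ℕ) : ℝ := ∏ k ∈ Finset.range n, Kr q (k + 1)

/-- The polynomial `P^ℓ_{m'm}(ζ)` for `m' ≥ m`:
`Σ_c (-1)^{c(ℓ-m)+c(c-1)/2} q^{-c(m'+m-1)/2}
([m'-m]_K![ℓ+m]_K![ℓ-m+c]_K!)/([m'-m+c]_K![ℓ+m-c]_K![ℓ-m]_K![c]_K!) ζ^c`. -/
def Ppos (q : ℝ) (ℓ : ℕ) (m' m : ℤ) : Polynomial ℝ :=
  ∑ c ∈ Finset.range (((ℓ : ℤ) + m).toNat + 1),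
    C ((-1 : ℝ) ^ ((c : ℤ) * ((ℓ : ℤ) - m) + ((c * (c - 1) / 2 : ℕ) : ℤ)) *
        q ^ (-(c : ℝ) * ((m' : ℝ) + (m : ℝ) - 1) / 2) *
        (KfactR q (m' - m).toNat * KfactR q ((ℓ : ℤ) + m).toNat *
            KfactR q ((ℓ : ℤ) - m + (c : ℤ)).toNat /
          (KfactR q (m' - m + (c : ℤ)).toNat * KfactR q ((ℓ : ℤ) + m - (c : ℤ)).toNat *
            KfactR q ((ℓ : ℤ) - m).toNat * KfactR q c))) * X ^ c

/-! ### Auxiliary machinery -/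

/-- `Sf q a c = ∏_{k<c} (1 - (-q)^(a+k))`. -/
def Sf (q : ℝ) (a c : ℕ) : ℝ := ∏ k ∈ Finset.range c, (1 - (-q) ^ (a + k))

lemma aux_Kr_eq (q : ℝ) (hq0 : 0 < q) (n : ℕ) :
    Kr q n = q ^ (((1:ℝ) - n) / 2) * (1 - (-q) ^ n) / (1 + q) := by
  have h1 : q ^ (-(n : ℝ) / 2) = q ^ (((1:ℝ) - n) / 2) * q ^ (-(1:ℝ)/2) := by
    rw [← Real.rpow_add hq0]; ring_nf
  have h2 : q ^ ((n : ℝ) / 2) = q ^ (((1:ℝ) - n) / 2) * q ^ (-(1:ℝ)/2) * q ^ n := by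
    rw [← Real.rpow_natCast q n, ← Real.rpow_add hq0, ← Real.rpow_add hq0]; ring_nf
  have h4 : q ^ ((1:ℝ)/2) = q ^ (-(1:ℝ)/2) * q := by
    rw [show ((1:ℝ)/2) = -1/2 + 1 by norm_num, Real.rpow_add hq0, Real.rpow_one]
  have hne : q ^ (-(1:ℝ)/2) ≠ 0 := ne_of_gt (Real.rpow_pos_of_pos hq0 _)
  have hq1 : (1:ℝ) + q ≠ 0 := by positivity
  rw [Kr, h1, h2, h4, neg_pow]
  field_simp
  ring

lemma aux_one_sub_ne (q : ℝ) (hq0 : 0 < q) (hq1 : q ≠ 1) {n : ℕ} (hn : n ≠ 0) :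
    1 - (-q) ^ n ≠ 0 := by
  rw [neg_pow]
  rcases Nat.even_or_odd n with h | h
  · rw [h.neg_one_pow, one_mul, sub_ne_zero]
    intro hcon
    rcases lt_or_gt_of_ne hq1 with hlt | hgt
    · exact absurd hcon.symm (ne_of_lt (pow_lt_one₀ hq0.le hlt hn))
    · exact absurd hcon.symm (ne_of_gt (one_lt_pow₀ hgt hn))
  · rw [h.neg_one_pow]
    have : 0 < q ^ n := pow_pos hq0 n
    nlinarith

lemma aux_Sf_ne (q : ℝ) (hq0 : 0 < q) (hq1 : q ≠ 1) {a : ℕ} (ha : a ≠ 0) (c : ℕ) :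
    Sf q a c ≠ 0 :=
  Finset.prod_ne_zero_iff.mpr fun k _ => aux_one_sub_ne q hq0 hq1 (by omega)

lemma aux_Sf_split1 (q : ℝ) (b c : ℕ) : Sf q 1 (b + c) = Sf q 1 b * Sf q (b + 1) c := by
  rw [Sf, Sf, Sf, Finset.prod_range_add]
  congr 1
  exact Finset.prod_congr rfl fun k _ => by rw [show 1 + (b + k) = b + 1 + k by omega]

lemma aux_KfactR_eq (q : ℝ) (hq0 : 0 < q) (n : ℕ) :
    KfactR q n = q ^ (-((n:ℝ) * ((n:ℝ) - 1)) / 4) * Sf q 1 n / (1 + q) ^ n := by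
  induction n with
  | zero => simp [KfactR, Sf]
  | succ n ih =>
    rw [KfactR, Finset.prod_range_succ, ← KfactR, ih, aux_Kr_eq q hq0,
      show Sf q 1 (n+1) = Sf q 1 n * (1 - (-q)^(1+n)) from Finset.prod_range_succ _ n]
    have hE : q ^ (-((↑(n+1):ℝ) * ((↑(n+1):ℝ) - 1)) / 4)
        = q ^ (-((n:ℝ) * ((n:ℝ) - 1)) / 4) * q ^ (((1:ℝ) - (↑(n+1):ℝ)) / 2) := by
      rw [← Real.rpow_add hq0]; congr 1; push_cast; ring
    rw [hE]
    have h1 : ((1:ℝ) + q) ≠ 0 := by positivity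
    have : (1 : ℝ) - (-q)^(n+1) = 1 - (-q)^(1+n) := by rw [add_comm]
    rw [this]
    field_simp
    ring

lemma aux_ratio_eq (q : ℝ) (hq0 : 0 < q) (hq1 : q ≠ 1) (a M N c : ℕ) (hc : c ≤ N) :
    KfactR q a * KfactR q N * KfactR q (M + c) /
      (KfactR q (a + c) * KfactR q (N - c) * KfactR q M * KfactR q c)
    = q ^ (((c:ℝ) * (c:ℝ) + (c:ℝ) * ((a:ℝ) - (M:ℝ) - (N:ℝ))) / 2) *
      (Sf q (M + 1) c * Sf q (N - c + 1) c) / (Sf q (a + 1) c * Sf q 1 c) := by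
  obtain ⟨d, rfl⟩ : ∃ d, N = d + c := ⟨N - c, by omega⟩
  have hd : d + c - c = d := by omega
  rw [hd]
  rw [aux_KfactR_eq q hq0 a, aux_KfactR_eq q hq0 (d + c), aux_KfactR_eq q hq0 (M + c),
    aux_KfactR_eq q hq0 (a + c), aux_KfactR_eq q hq0 d, aux_KfactR_eq q hq0 M,
    aux_KfactR_eq q hq0 c, aux_Sf_split1 q d c, aux_Sf_split1 q M c, aux_Sf_split1 q a c]
  have h1q : (0:ℝ) < 1 + q := by positivity
  have hrne : ∀ x : ℝ, q ^ x ≠ 0 := fun x => ne_of_gt (Real.rpow_pos_of_pos hq0 x)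
  have hS1a := aux_Sf_ne q hq0 hq1 (one_ne_zero) a
  have hS1d := aux_Sf_ne q hq0 hq1 (one_ne_zero) d
  have hS1M := aux_Sf_ne q hq0 hq1 (one_ne_zero) M
  have hS1c := aux_Sf_ne q hq0 hq1 (one_ne_zero) c
  have hTa := aux_Sf_ne q hq0 hq1 (Nat.succ_ne_zero a) c
  have hTd := aux_Sf_ne q hq0 hq1 (Nat.succ_ne_zero d) c
  have hTM := aux_Sf_ne q hq0 hq1 (Nat.succ_ne_zero M) c
  have key : q ^ (((c:ℝ) * (c:ℝ) + (c:ℝ) * ((a:ℝ) - (M:ℝ) - ((d:ℝ)+(c:ℝ)))) / 2)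
      = q ^ (-((a:ℝ) * ((a:ℝ) - 1)) / 4) * q ^ (-((↑(d+c):ℝ) * ((↑(d+c):ℝ) - 1)) / 4)
        * q ^ (-((↑(M+c):ℝ) * ((↑(M+c):ℝ) - 1)) / 4) /
        (q ^ (-((↑(a+c):ℝ) * ((↑(a+c):ℝ) - 1)) / 4) * q ^ (-((d:ℝ) * ((d:ℝ) - 1)) / 4)
         * q ^ (-((M:ℝ) * ((M:ℝ) - 1)) / 4) * q ^ (-((c:ℝ) * ((c:ℝ) - 1)) / 4)) := by
    rw [eq_div_iff (by positivity), ← Real.rpow_add hq0, ← Real.rpow_add hq0,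
      ← Real.rpow_add hq0, ← Real.rpow_add hq0, ← Real.rpow_add hq0, ← Real.rpow_add hq0]
    congr 1
    push_cast
    ring
  have hcast : ((c:ℝ) * (c:ℝ) + (c:ℝ) * ((a:ℝ) - (M:ℝ) - (↑(d+c):ℝ))) / 2
      = ((c:ℝ) * (c:ℝ) + (c:ℝ) * ((a:ℝ) - (M:ℝ) - ((d:ℝ)+(c:ℝ)))) / 2 := by push_cast; ring
  rw [hcast, key, pow_add ((1:ℝ)+q) d c, pow_add ((1:ℝ)+q) M c, pow_add ((1:ℝ)+q) a c]
  have h1qa := pow_ne_zero a h1q.ne'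
  have h1qd := pow_ne_zero d h1q.ne'
  have h1qM := pow_ne_zero M h1q.ne'
  have h1qc := pow_ne_zero c h1q.ne'
  field_simp

lemma aux_Sf_reflect (q : ℝ) (N c : ℕ) (hc : c ≤ N) :
    Sf q (N - c + 1) c = ∏ k ∈ Finset.range c, (1 - (-q) ^ (N - k)) := by
  rw [Sf, ← Finset.prod_range_reflect (fun j => 1 - (-q) ^ (N - c + 1 + j)) c]
  refine Finset.prod_congr rfl fun k hk => ?_
  have hk' : k < c := Finset.mem_range.mp hk
  rw [show N - c + 1 + (c - 1 - k) = N - k by omega]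

lemma aux_shifted_neg_mul (q : ℝ) (hq0 : 0 < q) (N c : ℕ) (hc : c ≤ N) :
    (-q) ^ (c * N) * shiftedFact ((-q) ^ (-(N:ℤ))) (-q) c
      = (-1:ℝ) ^ c * (-q) ^ (c * (c - 1) / 2) * Sf q (N - c + 1) c := by
  have hq : (-q) ≠ 0 := by intro h; nlinarith [hq0]
  rw [shiftedFact, show c * N = N * c by ring, pow_mul,
    show ((-q)^N)^c = ∏ _k ∈ Finset.range c, (-q)^N by simp,
    ← Finset.prod_mul_distrib]
  have hfac : ∀ k ∈ Finset.range c, (-q) ^ N * (1 - (-q) ^ (-(N:ℤ)) * (-q) ^ k)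
      = (-1) * ((-q) ^ k * (1 - (-q) ^ (N - k))) := by
    intro k hk
    have hk' : k < c := Finset.mem_range.mp hk
    have hNN : (-q) ^ N * (-q) ^ (-(N:ℤ)) = 1 := by
      rw [← zpow_natCast (-q) N, ← zpow_add₀ hq]; simp
    have hkN : (-q) ^ k * (-q) ^ (N - k) = (-q) ^ N := by
      rw [← pow_add]; congr 1; omega
    linear_combination (-(-q)^k) * hNN - hkN
  rw [Finset.prod_congr rfl hfac, Finset.prod_mul_distrib, Finset.prod_mul_distrib,
    Finset.prod_const, Finset.prod_pow_eq_pow_sum, Finset.sum_range_id,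
    Sf_reflect', Finset.card_range]
  ring
where
  Sf_reflect' : (∏ k ∈ Finset.range c, (1 - (-q) ^ (N - k))) = Sf q (N - c + 1) c :=
    (aux_Sf_reflect q N c hc).symm

lemma aux_negpow (x y : ℕ) (h : x % 2 = y % 2) : (-1:ℝ)^x = (-1:ℝ)^y := by
  conv_lhs => rw [← Nat.div_add_mod x 2]
  conv_rhs => rw [← Nat.div_add_mod y 2]
  rw [pow_add, pow_add, pow_mul, pow_mul, h]
  norm_num

lemma aux_hT (c : ℕ) : ((c * (c - 1) / 2 : ℕ) : ℝ) = (c:ℝ) * ((c:ℝ) - 1) / 2 := by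
  rcases c with _ | c'
  · simp
  · have hdvd : 2 ∣ (c' + 1) * ((c' + 1) - 1) := by
      simpa [mul_comm] using (Nat.even_mul_succ_self c').two_dvd
    have h2 := Nat.div_mul_cancel hdvd
    have h3 := congrArg (fun n : ℕ => (n : ℝ)) h2
    push_cast at h3 ⊢
    linarith

lemma aux_shifted_Sf (q : ℝ) (b c : ℕ) :
    shiftedFact ((-q) ^ (b + 1)) (-q) c = Sf q (b + 1) c := by
  refine Finset.prod_congr rfl fun k _ => ?_
  rw [← pow_add]

lemma aux_shifted_one (q : ℝ) (c : ℕ) : shiftedFact (-q) (-q) c = Sf q 1 c := by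
  refine Finset.prod_congr rfl fun k _ => ?_
  rw [pow_add, pow_one]

lemma aux_key (q : ℝ) (hq0 : 0 < q) (hq1 : q ≠ 1) (a M N c : ℕ) (hc : c ≤ N)
    (hMN : (M + N) % 2 = 0) :
    (-1 : ℝ) ^ ((c : ℤ) * (M : ℤ) + ((c * (c - 1) / 2 : ℕ) : ℤ)) *
        q ^ (-(c : ℝ) * ((a:ℝ) + (N:ℝ) - (M:ℝ) - 1) / 2) *
        (KfactR q a * KfactR q N * KfactR q (M + c) /
          (KfactR q (a + c) * KfactR q (N - c) * KfactR q M * KfactR q c))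
      = shiftedFact ((-q) ^ (-(N:ℤ))) (-q) c * shiftedFact ((-q) ^ ((M:ℤ) + 1)) (-q) c /
          (shiftedFact ((-q) ^ ((a:ℤ) + 1)) (-q) c * shiftedFact (-q) (-q) c) *
          (-q) ^ (c : ℤ) := by
  have hT := aux_hT c
  set E : ℝ := (c:ℝ) * ((c:ℝ) + 1) / 2 - (c:ℝ) * (N:ℝ) with hE
  have h1 : (-1 : ℝ) ^ ((c : ℤ) * (M : ℤ) + ((c * (c - 1) / 2 : ℕ) : ℤ)) *
        q ^ (-(c : ℝ) * ((a:ℝ) + (N:ℝ) - (M:ℝ) - 1) / 2) *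
        (KfactR q a * KfactR q N * KfactR q (M + c) /
          (KfactR q (a + c) * KfactR q (N - c) * KfactR q M * KfactR q c))
      = (-1:ℝ) ^ (c * N + c * (c - 1) / 2) * (q ^ E *
          (Sf q (M + 1) c * Sf q (N - c + 1) c / (Sf q (a + 1) c * Sf q 1 c))) := by
    rw [aux_ratio_eq q hq0 hq1 a M N c hc,
      show ((c:ℤ) * (M:ℤ) + ((c * (c - 1) / 2 : ℕ) : ℤ))
          = ((c * M + c * (c - 1) / 2 : ℕ) : ℤ) by push_cast; ring,
      zpow_natCast]
    have hsg : (-1:ℝ) ^ (c * M + c * (c - 1) / 2) = (-1:ℝ) ^ (c * N + c * (c - 1) / 2) := by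
      refine aux_negpow _ _ ?_
      have hMN2 : M % 2 = N % 2 := by omega
      have : c * M % 2 = c * N % 2 := by rw [Nat.mul_mod, hMN2, ← Nat.mul_mod]
      omega
    rw [hsg]
    have hqq : q ^ (-(c : ℝ) * ((a:ℝ) + (N:ℝ) - (M:ℝ) - 1) / 2) *
        q ^ (((c:ℝ) * (c:ℝ) + (c:ℝ) * ((a:ℝ) - (M:ℝ) - (N:ℝ))) / 2) = q ^ E := by
      rw [← Real.rpow_add hq0]; congr 1; rw [hE]; ring
    linear_combination ((-1:ℝ) ^ (c * N + c * (c - 1) / 2) *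
      (Sf q (M + 1) c * Sf q (N - c + 1) c) / (Sf q (a + 1) c * Sf q 1 c)) * hqq
  rw [h1]
  -- now the right-hand side
  rw [show ((M:ℤ) + 1) = ((M + 1 : ℕ) : ℤ) by push_cast; ring,
    show ((a:ℤ) + 1) = ((a + 1 : ℕ) : ℤ) by push_cast; ring,
    zpow_natCast, zpow_natCast, zpow_natCast,
    aux_shifted_Sf, aux_shifted_Sf, aux_shifted_one]
  have hq : (-q) ≠ 0 := by intro h; nlinarith [hq0]
  have hne : (-q) ^ (c * N) ≠ 0 := pow_ne_zero _ hq
  apply (mul_left_cancel₀ hne ?_).symm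
  have hmul := aux_shifted_neg_mul q hq0 N c hc
  have hsign : (-1:ℝ)^c * (-1:ℝ)^(c*(c-1)/2) * (-1:ℝ)^c
      = (-1:ℝ)^(c*N) * (-1:ℝ)^(c*N + c*(c-1)/2) := by
    rw [← pow_add, ← pow_add, ← pow_add]
    refine aux_negpow _ _ ?_
    generalize c * (c-1) / 2 = t
    generalize c * N = s
    omega
  have hq2 : q ^ (c*(c-1)/2) * q ^ c = q ^ (c*N) * q ^ E := by
    rw [← Real.rpow_natCast q (c*(c-1)/2), ← Real.rpow_natCast q c,
      ← Real.rpow_natCast q (c*N), ← Real.rpow_add hq0, ← Real.rpow_add hq0]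
    congr 1
    rw [hT, hE]
    push_cast
    ring
  have hscal : (-1:ℝ)^c * (-q)^(c*(c-1)/2) * (-q)^c
      = (-q)^(c*N) * ((-1:ℝ)^(c*N + c*(c-1)/2) * q ^ E) := by
    rw [neg_pow q (c*(c-1)/2), neg_pow q c, neg_pow q (c*N)]
    calc (-1:ℝ)^c * ((-1:ℝ)^(c*(c-1)/2) * q^(c*(c-1)/2)) * ((-1:ℝ)^c * q^c)
        = ((-1:ℝ)^c * (-1:ℝ)^(c*(c-1)/2) * (-1:ℝ)^c) * (q^(c*(c-1)/2) * q^c) := by ring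
      _ = ((-1:ℝ)^(c*N) * (-1:ℝ)^(c*N + c*(c-1)/2)) * (q^(c*N) * q^E) := by rw [hsign, hq2]
      _ = (-1:ℝ)^(c*N) * q^(c*N) * ((-1:ℝ)^(c*N + c*(c-1)/2) * q^E) := by ring
  linear_combination (Sf q (M + 1) c * (-q)^(c:ℕ) / (Sf q (a + 1) c * Sf q 1 c)) * hmul +
    (Sf q (M + 1) c * Sf q (N - c + 1) c / (Sf q (a + 1) c * Sf q 1 c)) * hscal

/-- For `ℓ ≥ 0` and `-ℓ ≤ m ≤ m' ≤ ℓ`, the polynomial `P^ℓ_{m'm}(ζ)` equals the little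
Q-Jacobi polynomial `p^{(m'-m, -m'-m)}_{ℓ+m}(ζ)` with `Q = -q`. -/
theorem Ppos_eq_littleQJacobi (q : ℝ) (hq0 : 0 < q) (hq1 : q ≠ 1)
    (ℓ : ℕ) (m m' : ℤ) (h1 : -(ℓ : ℤ) ≤ m) (h2 : m ≤ m') (h3 : m' ≤ (ℓ : ℤ)) :
    Ppos q ℓ m' m = littleQJacobi (-q) (m' - m) (-m' - m) ((ℓ : ℤ) + m).toNat := by
  obtain ⟨a, haZ⟩ : ∃ a : ℕ, (a:ℤ) = m' - m := ⟨(m' - m).toNat, Int.toNat_of_nonneg (by omega)⟩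
  obtain ⟨N, hNZ⟩ : ∃ N : ℕ, (N:ℤ) = (ℓ:ℤ) + m := ⟨((ℓ:ℤ) + m).toNat, Int.toNat_of_nonneg (by omega)⟩
  obtain ⟨M, hMZ⟩ : ∃ M : ℕ, (M:ℤ) = (ℓ:ℤ) - m := ⟨((ℓ:ℤ) - m).toNat, Int.toNat_of_nonneg (by omega)⟩
  have haR : (a:ℝ) = (m':ℝ) - (m:ℝ) := by exact_mod_cast congrArg (fun z : ℤ => (z : ℝ)) haZ
  have hNR : (N:ℝ) = (ℓ:ℝ) + (m:ℝ) := by exact_mod_cast congrArg (fun z : ℤ => (z : ℝ)) hNZ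
  have hMR : (M:ℝ) = (ℓ:ℝ) - (m:ℝ) := by exact_mod_cast congrArg (fun z : ℤ => (z : ℝ)) hMZ
  rw [Ppos, littleQJacobi,
    show ((ℓ:ℤ) + m).toNat = N by omega,
    show (m' - m).toNat = a by omega,
    show ((ℓ:ℤ) - m).toNat = M by omega]
  refine Finset.sum_congr rfl fun c hc => ?_
  have hcN : c ≤ N := by have := Finset.mem_range.mp hc; omega
  refine congrArg (· * X ^ c) (congrArg C ?_)
  rw [show (m' - m + (c:ℤ)).toNat = a + c by omega,
    show ((ℓ:ℤ) + m - (c:ℤ)).toNat = N - c by omega,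
    show ((ℓ:ℤ) - m + (c:ℤ)).toNat = M + c by omega,
    show (ℓ:ℤ) - m = (M:ℤ) from hMZ.symm,
    show -(c:ℝ) * ((m':ℝ) + (m:ℝ) - 1) / 2
        = -(c:ℝ) * ((a:ℝ) + (N:ℝ) - (M:ℝ) - 1) / 2 by rw [haR, hNR, hMR]; ring,
    show m' - m + (-m' - m) + (N:ℤ) + 1 = (M:ℤ) + 1 by omega,
    show m' - m + 1 = (a:ℤ) + 1 by omega]
  exact aux_key q hq0 hq1 a M N c hcN (by omega)
end
end

section
/- In a Z₂-graded dually paired pair of Hopf superalgebras U, A with dual bases {E_k} ⊂ U, {e^k} ⊂ A of equal parities p(E_k) = p(e^k), the universal T-matrix T = Σ_k (-1)^{p(e^k)(p(e^k)-1)/2} e^k ⊗ E_k satisfies T_{e,E} · T_{e',E} = T_{Δ(e),E}: explicitly, (Σ_k σ_k e^k ⊗ 1 ⊗ E_k)(Σ_ℓ σ_ℓ 1 ⊗ e^ℓ ⊗ E_ℓ) = Σ_m σ_m Δ(e^m) ⊗ E_m in A ⊗ A ⊗ U, where σ_k = (-1)^{p(e^k)(p(e^k)-1)/2}, provided E_k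 E_ℓ = Σ_m f_{kℓ}^m E_m and Δ(e^m) = Σ_{k,ℓ} f_{kℓ}^m e^k ⊗ e^ℓ with even structure constants. -/
lemma tri_add (a b : ℕ) : a*(a-1)/2 + (b*(b-1)/2 + a*b) = (a+b)*((a+b)-1)/2 := by
  have h : ∀ n : ℕ, 2 * (n*(n-1)/2) = n*(n-1) := fun n =>
    Nat.mul_div_cancel' (Nat.even_mul_pred_self n).two_dvd
  have key : a*(a-1) + (b*(b-1) + 2*(a*b)) = (a+b)*((a+b)-1) := by
    rcases a with _ | a
    · simp
    · rcases b with _ | b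
      · simp [Nat.mul_comm]
      · have hc : a+1+(b+1)-1 = a+b+1 := by omega
        simp only [Nat.add_sub_cancel, hc]
        ring
  have ha := h a; have hb := h b; have hab := h (a+b)
  omega

/-- Multiplicativity of the universal `T`-matrix for a dually paired pair of
`ℤ₂`-graded Hopf superalgebras `U`, `A` with finite homogeneous dual bases
`{E_k} ⊂ U`, `{e^k} ⊂ A` of equal degrees `p k` (parities `p k mod 2`).

The module `M` plays the role of `A ⊗ A ⊗ U` with its Koszul-sign multiplication, via
the trilinear map `t a b u = a ⊗ b ⊗ u`; the hypothesis `hmul` is the Koszul rule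
`(e^k ⊗ 1 ⊗ E_k)(1 ⊗ e^ℓ ⊗ E_ℓ) = (-1)^{p_k p_ℓ} e^k ⊗ e^ℓ ⊗ E_k E_ℓ`, `hE` gives the
structure constants `E_k E_ℓ = Σ_m f_{kℓ}^m E_m`, and `heven` says the structure
constants respect the grading.  With `σ_k = (-1)^{p_k(p_k-1)/2}`, the conclusion is
`T^{(1)} · T^{(2)} = Σ_m σ_m Δ(e^m) ⊗ E_m` where `Δ(e^m) = Σ_{kℓ} f_{kℓ}^m e^k ⊗ e^ℓ`. -/
theorem universal_T_multiplicative {K A U M ι : Type*} [CommRing K]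
    [Ring A] [Ring U] [Ring M] [Algebra K A] [Algebra K U] [Algebra K M] [Fintype ι]
    (p : ι → ℕ) (f : ι → ι → ι → K) (E : ι → U) (e : ι → A)
    (t : A →ₗ[K] A →ₗ[K] U →ₗ[K] M)
    (hmul : ∀ k l : ι, t (e k) 1 (E k) * t 1 (e l) (E l) =
      ((-1 : K) ^ (p k * p l)) • t (e k) (e l) (E k * E l))
    (hE : ∀ k l : ι, E k * E l = ∑ m : ι, f k l m • E m)
    (heven : ∀ k l m : ι, f k l m ≠ 0 → p m = p k + p l) :
    (∑ k : ι, ((-1 : K) ^ (p k * (p k - 1) / 2)) • t (e k) 1 (E k)) *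
      (∑ l : ι, ((-1 : K) ^ (p l * (p l - 1) / 2)) • t 1 (e l) (E l)) =
    ∑ m : ι, ((-1 : K) ^ (p m * (p m - 1) / 2)) •
      ∑ k : ι, ∑ l : ι, f k l m • t (e k) (e l) (E m) := by
  rw [Finset.sum_mul_sum]
  have hrhs : (∑ m : ι, ((-1 : K) ^ (p m * (p m - 1) / 2)) •
      ∑ k : ι, ∑ l : ι, f k l m • t (e k) (e l) (E m))
      = ∑ k : ι, ∑ l : ι, ∑ m : ι,
        ((-1 : K) ^ (p m * (p m - 1) / 2)) • f k l m • t (e k) (e l) (E m) := by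
    simp only [Finset.smul_sum]
    rw [Finset.sum_comm]
    exact Finset.sum_congr rfl fun k _ => Finset.sum_comm
  rw [hrhs]
  refine Finset.sum_congr rfl fun k _ => Finset.sum_congr rfl fun l _ => ?_
  rw [smul_mul_smul_comm, hmul, hE, map_sum, Finset.smul_sum, Finset.smul_sum]
  refine Finset.sum_congr rfl fun m _ => ?_
  rw [map_smul, smul_smul, smul_smul, smul_smul]
  by_cases hf : f k l m = 0
  · simp [hf]
  · have hp := heven k l m hf
    congr 1
    rw [hp, ← pow_add, ← pow_add, ← tri_add (p k) (p l)]
    ring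
end
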